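/- Let F : ℝ^n → ℝ^n and e : ℝ^n → ℝ^n be co-coercive with constants c₁ > 0 and c₂ > 0 respectively, and suppose the set S = {x ∈ ℝ^n : F(x) + e(x) = 0} is nonempty. Let (τ_k)_{k≥1} be step sizes with 0 < inf_k τ_k ≤ sup_k τ_k < min(c₁, c₂). Then for any starting point x⁰, the iteration x^k = x^{k−1} − τ_k (F(x^{k−1}) + e(x^{k−1})) converges to a point of S. -/

import Mathlib

/-!
The update direction `F + e` is co-coercive with constant `min c₁ c₂ / 2`, so a forward step of
length `τ < min c₁ c₂` decreases the squared distance to every zero `z` of `F + e` by at least a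
fixed multiple of `‖(F + e) xᵏ‖²`. Hence the iterates are Fejér monotone with respect to the zero
set, `(F + e) xᵏ → 0`, and every cluster point (one exists, the orbit being bounded) is a zero by
continuity. Fejér monotonicity with respect to that cluster point forces the whole sequence to
converge to it.
-/

open RealInnerProductSpace Filter

def CoCoercive {n : ℕ} (G : EuclideanSpace ℝ (Fin n) → EuclideanSpace ℝ (Fin n)) (c : ℝ) : Prop :=
  0 < c ∧ ∀ x y, c * ‖G x - G y‖ ^ 2 ≤ ⟪G x - G y, x - y⟫

open Topology Metric

section Fejer

variable {X : Type*} [PseudoMetricSpace X]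

def FejerMonotone (S : Set X) (x : ℕ → X) : Prop :=
  ∀ z ∈ S, Antitone fun k => dist (x k) z

theorem FejerMonotone.exists_tendsto [ProperSpace X] {S : Set X} {x : ℕ → X}
    (hx : FejerMonotone S x) (hS : S.Nonempty) (hcluster : ∀ y, MapClusterPt y atTop x → y ∈ S) :
    ∃ y ∈ S, Tendsto x atTop (𝓝 y) := by
  obtain ⟨z, hz⟩ := hS
  have hbounded : ∀ k, x k ∈ closedBall z (dist (x 0) z) := fun k => hx z hz (Nat.zero_le k)
  obtain ⟨y, -, hy⟩ := (isCompact_closedBall z _).exists_mapClusterPt (f := atTop)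
    (tendsto_principal.2 (Eventually.of_forall hbounded))
  have hyS := hcluster y hy
  refine ⟨y, hyS, Metric.tendsto_atTop.2 fun ε hε => ?_⟩
  obtain ⟨N, hN⟩ := (hy.frequently (ball_mem_nhds y hε)).exists
  exact ⟨N, fun k hk => (hx y hyS hk).trans_lt hN⟩

end Fejer

theorem MapClusterPt.apply_eq_of_tendsto {ι X Y : Type*} [TopologicalSpace X] [TopologicalSpace Y]
    [T2Space Y] {l : Filter ι} {u : ι → X} {f : X → Y} {y : X} {b : Y}
    (hy : MapClusterPt y l u) (hf : ContinuousAt f y) (hfu : Tendsto (f ∘ u) l (𝓝 b)) :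
    f y = b :=
  eq_of_nhds_neBot (ClusterPt.mono (hy.continuousAt_comp hf) hfu).neBot

theorem tendsto_zero_of_succ_add_mul_le {r s : ℕ → ℝ} {δ : ℝ} (hδ : 0 < δ)
    (hr : ∀ k, 0 ≤ r k) (hs : ∀ k, 0 ≤ s k) (h : ∀ k, r (k + 1) + δ * s k ≤ r k) :
    Tendsto s atTop (𝓝 0) := by
  have htelescope : ∀ N, δ * ∑ i ∈ Finset.range N, s i + r N ≤ r 0 := by
    intro N
    induction N with
    | zero => simp
    | succ N ih => rw [Finset.sum_range_succ]; linarith [h N]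
  refine (summable_of_sum_range_le (c := r 0 / δ) hs fun N => ?_).tendsto_atTop_zero
  rw [le_div_iff₀' hδ]
  linarith [htelescope N, hr N]

theorem tendsto_zero_of_norm_sq_tendsto_zero {ι E : Type*} [SeminormedAddCommGroup E]
    {l : Filter ι} {u : ι → E} (h : Tendsto (fun k => ‖u k‖ ^ 2) l (𝓝 0)) :
    Tendsto u l (𝓝 0) := by
  rw [tendsto_zero_iff_norm_tendsto_zero]
  simpa [Real.sqrt_sq (norm_nonneg _)] using h.sqrt

namespace CoCoercive

variable {n : ℕ} {G : EuclideanSpace ℝ (Fin n) → EuclideanSpace ℝ (Fin n)} {β : ℝ}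

theorem lipschitzWith (hG : CoCoercive G β) : LipschitzWith (Real.toNNReal β⁻¹) G := by
  refine LipschitzWith.of_dist_le_mul fun x y => ?_
  rw [Real.coe_toNNReal _ (inv_nonneg.2 hG.1.le), dist_eq_norm, dist_eq_norm,
    le_inv_mul_iff₀ hG.1]
  have hinner := (hG.2 x y).trans (real_inner_le_norm _ _)
  rcases (norm_nonneg (G x - G y)).eq_or_lt with hzero | hpos
  · rw [← hzero, mul_zero]
    exact norm_nonneg _
  · exact le_of_mul_le_mul_left (by linarith) hpos

theorem add {F e : EuclideanSpace ℝ (Fin n) → EuclideanSpace ℝ (Fin n)} {c₁ c₂ : ℝ}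
    (hF : CoCoercive F c₁) (he : CoCoercive e c₂) : CoCoercive (F + e) (min c₁ c₂ / 2) := by
  have hc : 0 < min c₁ c₂ := lt_min hF.1 he.1
  refine ⟨half_pos hc, fun x y => ?_⟩
  set p := F x - F y
  set q := e x - e y
  have hpq : (F + e) x - (F + e) y = p + q := by simp only [Pi.add_apply, p, q]; abel
  have hsq : ‖p + q‖ ^ 2 ≤ 2 * (‖p‖ ^ 2 + ‖q‖ ^ 2) :=
    (pow_le_pow_left₀ (norm_nonneg _) (norm_add_le p q) 2).trans add_sq_le
  rw [hpq, inner_add_left]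
  calc min c₁ c₂ / 2 * ‖p + q‖ ^ 2 ≤ min c₁ c₂ * (‖p‖ ^ 2 + ‖q‖ ^ 2) := by
        linarith [mul_le_mul_of_nonneg_left hsq (half_pos hc).le]
    _ ≤ c₁ * ‖p‖ ^ 2 + c₂ * ‖q‖ ^ 2 := by
        nlinarith [min_le_left c₁ c₂, min_le_right c₁ c₂, sq_nonneg ‖p‖, sq_nonneg ‖q‖]
    _ ≤ ⟪p, x - y⟫ + ⟪q, x - y⟫ := add_le_add (hF.2 x y) (he.2 x y)

theorem norm_sub_smul_sub_sq_le (hG : CoCoercive G β) {z : EuclideanSpace ℝ (Fin n)}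
    (hz : G z = 0) {t : ℝ} (ht : 0 ≤ t) (x : EuclideanSpace ℝ (Fin n)) :
    ‖x - t • G x - z‖ ^ 2 ≤ ‖x - z‖ ^ 2 - t * (2 * β - t) * ‖G x‖ ^ 2 := by
  have hcoco : β * ‖G x‖ ^ 2 ≤ ⟪x - z, G x⟫ := by
    simpa [hz, real_inner_comm] using hG.2 x z
  rw [sub_right_comm, norm_sub_sq_real, real_inner_smul_right, norm_smul, mul_pow,
    Real.norm_eq_abs, sq_abs]
  nlinarith [mul_le_mul_of_nonneg_left hcoco ht]

theorem tendsto_of_forward_step (hG : CoCoercive G β) (hzero : ∃ z, G z = 0)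
    {τ : ℕ → ℝ} {a b : ℝ} (ha : 0 < a) (hτ : ∀ k, a ≤ τ k ∧ τ k ≤ b) (hb : b < 2 * β)
    {x : ℕ → EuclideanSpace ℝ (Fin n)} (hx : ∀ k, x (k + 1) = x k - τ k • G (x k)) :
    ∃ y, G y = 0 ∧ Tendsto x atTop (𝓝 y) := by
  have hrate : 0 < a * (2 * β - b) := mul_pos ha (sub_pos.2 hb)
  have hdecrease : ∀ z, G z = 0 → ∀ k,
      ‖x (k + 1) - z‖ ^ 2 + a * (2 * β - b) * ‖G (x k)‖ ^ 2 ≤ ‖x k - z‖ ^ 2 := by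
    intro z hz k
    obtain ⟨hak, hkb⟩ := hτ k
    have hstep : a * (2 * β - b) ≤ τ k * (2 * β - τ k) :=
      mul_le_mul hak (by linarith) (by linarith) (ha.le.trans hak)
    rw [hx]
    linarith [hG.norm_sub_smul_sub_sq_le hz (ha.le.trans hak) (x k),
      mul_le_mul_of_nonneg_right hstep (sq_nonneg ‖G (x k)‖)]
  have hfejer : FejerMonotone {z | G z = 0} x := fun z hz =>
    antitone_nat_of_succ_le fun k => by
      simp only [dist_eq_norm]
      exact (sq_le_sq₀ (norm_nonneg _) (norm_nonneg _)).1 <|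
        (le_add_of_nonneg_right (mul_nonneg hrate.le (sq_nonneg _))).trans (hdecrease z hz k)
  obtain ⟨z, hz⟩ := hzero
  have hGx : Tendsto (fun k => G (x k)) atTop (𝓝 0) :=
    tendsto_zero_of_norm_sq_tendsto_zero <| tendsto_zero_of_succ_add_mul_le
      (r := fun k => ‖x k - z‖ ^ 2) hrate (fun k => sq_nonneg _) (fun k => sq_nonneg _)
      (hdecrease z hz)
  exact hfejer.exists_tendsto ⟨z, hz⟩ fun y hy =>
    hy.apply_eq_of_tendsto hG.lipschitzWith.continuous.continuousAt hGx

end CoCoercive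

/-- If `F` and `e` are co-coercive with constants `c₁, c₂ > 0`, the zero set
`S = {x : F x + e x = 0}` is nonempty, and the steps satisfy
`0 < inf τ_k ≤ sup τ_k < min(c₁, c₂)`, then the iteration
`x^k = x^{k−1} − τ_k (F(x^{k−1}) + e(x^{k−1}))` converges to a point of `S`
from any starting point. -/
theorem two_stage_incremental_convergence {n : ℕ}
    (F e : EuclideanSpace ℝ (Fin n) → EuclideanSpace ℝ (Fin n)) (c₁ c₂ : ℝ)
    (hF : CoCoercive F c₁) (he : CoCoercive e c₂)
    (S : Set (EuclideanSpace ℝ (Fin n)))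
    (hS : S = {x | F x + e x = 0}) (hSne : S.Nonempty)
    (τ : ℕ → ℝ) (a b : ℝ) (ha : 0 < a) (hab : ∀ k, a ≤ τ k ∧ τ k ≤ b)
    (hb : b < min c₁ c₂)
    (x : ℕ → EuclideanSpace ℝ (Fin n))
    (hiter : ∀ k, x (k + 1) = x k - τ (k + 1) • (F (x k) + e (x k))) :
    ∃ xstar ∈ S, Tendsto x atTop (nhds xstar) := by
  subst hS
  exact (hF.add he).tendsto_of_forward_step hSne ha (fun k => hab (k + 1)) (by linarith) hiter
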